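/- Let T > 0, α ∈ (0, 1/2), C > 0, ε ∈ (0, 1/α − 2) and γ ∈ (0, 1/(2+ε) − α]. Define the fractional kernel K(s,t) := C·(t−s)^{−α} for 0 ≤ s < t ≤ T. Then there exists a constant L > 0 such that for all 0 ≤ t ≤ t' ≤ T one has ∫_0^t |K(s,t') − K(s,t)|^{2+ε} ds + ∫_t^{t'} |K(s,t')|^{2+ε} ds ≤ L·(t'−t)^{γ(2+ε)}. -/

import Mathlib

/-!
Write `p = 2 + ε` and `β = 1 - α p > 0`. On `s < t`, superadditivity of `x ↦ x ^ p` bounds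
`|K(s,t') - K(s,t)| ^ p` by `C ^ p ((t - s) ^ (-α p) - (t' - s) ^ (-α p))`, whose integral over
`[0, t]` is `C ^ p (t ^ β - t' ^ β + (t' - t) ^ β) / β ≤ C ^ p (t' - t) ^ β / β`. The second
integral equals `C ^ p (t' - t) ^ β / β` exactly, and `(t' - t) ^ β ≤ T ^ (β - γ p) (t' - t) ^ (γ p)`
because `γ p ≤ β`.
-/

open MeasureTheory Set intervalIntegral

namespace Real

lemma rpow_sub_le_sub_rpow {a b p : ℝ} (hb : 0 ≤ b) (hba : b ≤ a) (hp : 1 ≤ p) :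
    (a - b) ^ p ≤ a ^ p - b ^ p := by
  have := add_rpow_le_rpow_add (sub_nonneg.2 hba) hb hp
  rw [sub_add_cancel] at this
  linarith

lemma rpow_le_rpow_mul_rpow_of_le {x T a b : ℝ} (hx : 0 ≤ x) (hxT : x ≤ T) (hab : a ≤ b)
    (hb : b ≠ 0) : x ^ b ≤ T ^ (b - a) * x ^ a := by
  calc x ^ b = x ^ (b - a) * x ^ a := by rw [← rpow_add' hx (by simpa using hb), sub_add_cancel]
    _ ≤ T ^ (b - a) * x ^ a := by gcongr

end Real

open Real

lemma abs_mul_rpow_neg_sub_rpow_le {C α p x y : ℝ} (hC : 0 ≤ C) (hα : 0 ≤ α) (hp : 1 ≤ p)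
    (hx : 0 < x) (hxy : x ≤ y) :
    |C * y ^ (-α) - C * x ^ (-α)| ^ p ≤ C ^ p * (x ^ (-(α * p)) - y ^ (-(α * p))) := by
  have hyx : y ^ (-α) ≤ x ^ (-α) := rpow_le_rpow_of_nonpos hx hxy (neg_nonpos.2 hα)
  have hpow : ∀ z : ℝ, 0 ≤ z → (z ^ (-α)) ^ p = z ^ (-(α * p)) := fun z hz => by
    rw [← rpow_mul hz, neg_mul]
  rw [← mul_sub, abs_mul, abs_of_nonneg hC, abs_sub_comm, abs_of_nonneg (sub_nonneg.2 hyx),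
    mul_rpow hC (sub_nonneg.2 hyx), ← hpow x hx.le, ← hpow y (hx.le.trans hxy)]
  gcongr
  exact rpow_sub_le_sub_rpow (rpow_nonneg (hx.le.trans hxy) _) hyx hp

lemma intervalIntegrable_sub_rpow {r : ℝ} (hr : -1 < r) (c a b : ℝ) :
    IntervalIntegrable (fun s => (c - s) ^ r) volume a b := by
  simpa using (intervalIntegrable_rpow' hr (a := c - a) (b := c - b)).comp_sub_left c

lemma integral_sub_rpow {r : ℝ} (hr : -1 < r) (a b c : ℝ) :
    ∫ s in a..b, (c - s) ^ r = ((c - a) ^ (r + 1) - (c - b) ^ (r + 1)) / (r + 1) := by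
  rw [integral_comp_sub_left (fun u => u ^ r) c, integral_rpow (Or.inl hr)]

lemma integral_sub_rpow_neg_sub_sub_rpow_neg_le {r t t' : ℝ} (hr : r < 1) (ht : 0 ≤ t)
    (htt' : t ≤ t') :
    ∫ s in (0 : ℝ)..t, ((t - s) ^ (-r) - (t' - s) ^ (-r)) ≤ (t' - t) ^ (1 - r) / (1 - r) := by
  have hr' : -1 < -r := by linarith
  have hβ : 0 < 1 - r := by linarith
  rw [integral_sub (intervalIntegrable_sub_rpow hr' t 0 t) (intervalIntegrable_sub_rpow hr' t' 0 t),
    integral_sub_rpow hr', integral_sub_rpow hr', neg_add_eq_sub, sub_zero, sub_zero, sub_self,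
    zero_rpow hβ.ne', ← sub_div, div_le_div_iff_of_pos_right hβ]
  have : t ^ (1 - r) ≤ t' ^ (1 - r) := rpow_le_rpow ht htt' hβ.le
  linarith

lemma integral_abs_mul_rpow_neg_sub_le {C α p t t' : ℝ} (hC : 0 ≤ C) (hα : 0 ≤ α) (hp : 1 ≤ p)
    (hαp : α * p < 1) (ht : 0 ≤ t) (htt' : t ≤ t') :
    ∫ s in (0 : ℝ)..t, |C * (t' - s) ^ (-α) - C * (t - s) ^ (-α)| ^ p
      ≤ C ^ p * ((t' - t) ^ (1 - α * p) / (1 - α * p)) := by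
  have hr : -1 < -(α * p) := by linarith
  have hdom : IntegrableOn (fun s => C ^ p * ((t - s) ^ (-(α * p)) - (t' - s) ^ (-(α * p))))
      (Ioo 0 t) :=
    (((intervalIntegrable_sub_rpow hr t 0 t).sub
      (intervalIntegrable_sub_rpow hr t' 0 t)).const_mul _).1.mono_set Ioo_subset_Ioc_self
  calc ∫ s in (0 : ℝ)..t, |C * (t' - s) ^ (-α) - C * (t - s) ^ (-α)| ^ p
      = ∫ s in Ioo 0 t, |C * (t' - s) ^ (-α) - C * (t - s) ^ (-α)| ^ p := by
        rw [integral_of_le ht, integral_Ioc_eq_integral_Ioo]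
    _ ≤ ∫ s in Ioo 0 t, C ^ p * ((t - s) ^ (-(α * p)) - (t' - s) ^ (-(α * p))) :=
        integral_mono_of_nonneg (ae_of_all _ fun _ => by positivity) hdom
          (ae_restrict_of_forall_mem measurableSet_Ioo fun s hs =>
            abs_mul_rpow_neg_sub_rpow_le hC hα hp (sub_pos.2 hs.2) (by linarith))
    _ = C ^ p * ∫ s in (0 : ℝ)..t, ((t - s) ^ (-(α * p)) - (t' - s) ^ (-(α * p))) := by
        rw [← integral_Ioc_eq_integral_Ioo, ← integral_of_le ht, intervalIntegral.integral_const_mul]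
    _ ≤ C ^ p * ((t' - t) ^ (1 - α * p) / (1 - α * p)) := by
        gcongr
        exact integral_sub_rpow_neg_sub_sub_rpow_neg_le hαp ht htt'

lemma integral_abs_mul_rpow_neg {C α p t t' : ℝ} (hC : 0 ≤ C) (hαp : α * p < 1) (htt' : t ≤ t') :
    ∫ s in t..t', |C * (t' - s) ^ (-α)| ^ p = C ^ p * ((t' - t) ^ (1 - α * p) / (1 - α * p)) := by
  have hr : -1 < -(α * p) := by linarith
  have hpow : ∀ s ∈ uIcc t t', |C * (t' - s) ^ (-α)| ^ p = C ^ p * (t' - s) ^ (-(α * p)) := by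
    intro s hs
    have hs' : 0 ≤ t' - s := sub_nonneg.2 (uIcc_of_le htt' ▸ hs).2
    rw [abs_of_nonneg (by positivity), mul_rpow hC (rpow_nonneg hs' _), ← rpow_mul hs', neg_mul]
  rw [integral_congr hpow, intervalIntegral.integral_const_mul, integral_sub_rpow hr, sub_self,
    neg_add_eq_sub, zero_rpow (by linarith), sub_zero]

/-- The fractional kernel `K(s,t) = C (t-s)^(-α)` satisfies the kernel regularity
condition with parameters `γ ∈ (0, 1/(2+ε) - α]` and `ε ∈ (0, 1/α - 2)`. -/
theorem fractional_kernel_regularity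
    (T : ℝ) (hT : 0 < T) (C α ε γ : ℝ)
    (hα : α ∈ Set.Ioo (0 : ℝ) (1 / 2)) (hC : 0 < C)
    (hε : ε ∈ Set.Ioo (0 : ℝ) (1 / α - 2))
    (hγ : γ ∈ Set.Ioc (0 : ℝ) (1 / (2 + ε) - α)) :
    ∃ L > 0, ∀ t t' : ℝ, 0 ≤ t → t ≤ t' → t' ≤ T →
      (∫ s in (0 : ℝ)..t, |C * (t' - s) ^ (-α) - C * (t - s) ^ (-α)| ^ (2 + ε)) +
        (∫ s in t..t', |C * (t' - s) ^ (-α)| ^ (2 + ε))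
      ≤ L * (t' - t) ^ (γ * (2 + ε)) := by
  obtain ⟨hα0, -⟩ := hα
  obtain ⟨hε0, hε1⟩ := hε
  have hp : 1 ≤ 2 + ε := by linarith
  have hαp : α * (2 + ε) < 1 := (lt_div_iff₀' hα0).1 (by linarith)
  have hγp : γ * (2 + ε) ≤ 1 - α * (2 + ε) := by
    have := (le_div_iff₀ (by linarith : (0 : ℝ) < 2 + ε)).1 (le_sub_iff_add_le.1 hγ.2)
    linarith
  set β := 1 - α * (2 + ε)
  have hβ : 0 < β := by linarith
  refine ⟨2 * C ^ (2 + ε) * T ^ (β - γ * (2 + ε)) / β, by positivity, ?_⟩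
  intro t t' ht htt' ht'T
  rw [integral_abs_mul_rpow_neg hC.le hαp htt']
  calc _ ≤ C ^ (2 + ε) * ((t' - t) ^ β / β) + C ^ (2 + ε) * ((t' - t) ^ β / β) := by
        gcongr
        exact integral_abs_mul_rpow_neg_sub_le hC.le hα0.le hp hαp ht htt'
    _ = 2 * C ^ (2 + ε) / β * (t' - t) ^ β := by ring
    _ ≤ 2 * C ^ (2 + ε) / β * (T ^ (β - γ * (2 + ε)) * (t' - t) ^ (γ * (2 + ε))) := by
        gcongr
        exact rpow_le_rpow_mul_rpow_of_le (by linarith) (by linarith) hγp hβ.ne'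
    _ = 2 * C ^ (2 + ε) * T ^ (β - γ * (2 + ε)) / β * (t' - t) ^ (γ * (2 + ε)) := by ring
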